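/- arXiv:1301.2483 — 2 statements merged into one kernel-verified Lean document; each statement's English description precedes it below -/
import Mathlib

section
/- For all positive integers m, n and all real x, y, the squared norm of ∂φ_{m,n}/∂y in ℂ³ ≅ ℝ⁶ equals (m+n)·(m+n − (m−n)cos 2x)/2. -/
open Real Complex

/-- The doubly periodic immersion `φ_{m,n} : ℝ² → ℂ³` of Karpukhin's family of
minimal tori of revolution in `S⁵ ⊂ ℂ³`. -/
noncomputable def phiMN (m n : ℕ) (x y : ℝ) : Fin 3 → ℂ :=
  ![(Real.sqrt (((m : ℝ) + n) / (2 * m + n)) : ℂ) * Complex.exp (Complex.I * m * y) *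
      (Real.sin x : ℂ),
    (Real.sqrt (((m : ℝ) + n) / (m + 2 * n)) : ℂ) * Complex.exp (Complex.I * n * y) *
      (Real.cos x : ℂ),
    (Real.sqrt ((n : ℝ) * Real.cos x ^ 2 / (m + 2 * n) +
        (m : ℝ) * Real.sin x ^ 2 / (2 * m + n)) : ℂ) *
      Complex.exp (-(Complex.I * ((m : ℝ) + n) * y))]

/-!
Each coordinate of `φ_{m,n}(x, ·)` is a real amplitude `a_j(x)` times a character `e^{i k_j y}`, so
`|∂_y φ_j|² = a_j² k_j²`. With `k = (m, n, -(m+n))` the weights of `sin² x` and `cos² x` in the sum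
collapse to `m (m+n)` and `n (m+n)`, and `m sin² x + n cos² x = ((m+n) - (m-n) cos 2x) / 2`.
-/

theorem hasDerivAt_mul_cexp_I_mul (c : ℂ) (k y : ℝ) :
    HasDerivAt (fun s : ℝ => c * cexp (I * k * s)) (c * (cexp (I * k * y) * (I * k))) y := by
  have h : HasDerivAt (fun s : ℝ => I * k * (s : ℂ)) (I * k) y := by
    simpa using (ofRealCLM.hasDerivAt (x := y)).const_mul (I * k)
  exact h.cexp.const_mul c

theorem norm_deriv_ofReal_mul_cexp_I_mul_sq (a k y : ℝ) :
    ‖deriv (fun s : ℝ => (a : ℂ) * cexp (I * k * s)) y‖ ^ 2 = a ^ 2 * k ^ 2 := by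
  have h : ‖cexp (I * k * y)‖ = 1 := by simp [norm_exp]
  rw [(hasDerivAt_mul_cexp_I_mul a k y).deriv, norm_mul, norm_mul, norm_mul, h, norm_I,
    norm_real, norm_real, Real.norm_eq_abs, Real.norm_eq_abs, one_mul, one_mul, mul_pow, sq_abs,
    sq_abs]

theorem add_div_mul_sq_add_div_mul_sq (p q : ℝ) (hp : 0 ≤ p) (hq : 0 ≤ q) :
    (p + q) / (2 * p + q) * p ^ 2 + p / (2 * p + q) * (p + q) ^ 2 = p * (p + q) :=
  calc _ = p * (p + q) * (2 * p + q) / (2 * p + q) := by ring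
    _ = p * (p + q) := mul_div_cancel_of_imp fun h => by
        obtain rfl : p = 0 := by linarith
        simp

theorem mul_sin_sq_add_mul_cos_sq (p q x : ℝ) :
    p * Real.sin x ^ 2 + q * Real.cos x ^ 2 = ((p + q) - (p - q) * Real.cos (2 * x)) / 2 := by
  rw [Real.sin_sq_eq_half_sub, Real.cos_sq x]
  ring

theorem phiMN_apply_zero (m n : ℕ) (x : ℝ) :
    (fun s : ℝ => phiMN m n x s 0) = fun s : ℝ =>
      ((√(((m : ℝ) + n) / (2 * m + n)) * Real.sin x : ℝ) : ℂ) * cexp (I * (m : ℝ) * s) := by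
  ext s
  simp only [phiMN, Matrix.cons_val_zero, ofReal_mul, ofReal_natCast]
  ring

theorem phiMN_apply_one (m n : ℕ) (x : ℝ) :
    (fun s : ℝ => phiMN m n x s 1) = fun s : ℝ =>
      ((√(((m : ℝ) + n) / (m + 2 * n)) * Real.cos x : ℝ) : ℂ) * cexp (I * (n : ℝ) * s) := by
  ext s
  simp only [phiMN, Matrix.cons_val_one, Matrix.cons_val_zero, ofReal_mul, ofReal_natCast]
  ring

theorem phiMN_apply_two (m n : ℕ) (x : ℝ) :
    (fun s : ℝ => phiMN m n x s 2) = fun s : ℝ =>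
      ((√((n : ℝ) * Real.cos x ^ 2 / (m + 2 * n) + (m : ℝ) * Real.sin x ^ 2 / (2 * m + n)) : ℝ) :
          ℂ) * cexp (I * (-((m : ℝ) + n) : ℝ) * s) := by
  ext s
  simp only [phiMN, Matrix.cons_val_two, Matrix.tail_cons, Matrix.head_cons, ofReal_neg,
    ofReal_add, ofReal_natCast]
  ring_nf

theorem phiMN_partial_y_sq_norm_general (m n : ℕ) (x y : ℝ) :
    ∑ j : Fin 3, ‖deriv (fun s : ℝ => phiMN m n x s j) y‖ ^ 2 =
      ((m : ℝ) + n) * (((m : ℝ) + n) - ((m : ℝ) - n) * Real.cos (2 * x)) / 2 := by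
  rw [Fin.sum_univ_three, phiMN_apply_zero, phiMN_apply_one, phiMN_apply_two,
    norm_deriv_ofReal_mul_cexp_I_mul_sq, norm_deriv_ofReal_mul_cexp_I_mul_sq,
    norm_deriv_ofReal_mul_cexp_I_mul_sq, mul_pow, mul_pow, sq_sqrt (by positivity),
    sq_sqrt (by positivity), sq_sqrt (by positivity), neg_sq]
  have hm : (0 : ℝ) ≤ m := m.cast_nonneg
  have hn : (0 : ℝ) ≤ n := n.cast_nonneg
  linear_combination Real.sin x ^ 2 * add_div_mul_sq_add_div_mul_sq m n hm hn +
    Real.cos x ^ 2 * add_div_mul_sq_add_div_mul_sq n m hn hm +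
    ((m : ℝ) + n) * mul_sin_sq_add_mul_cos_sq m n x

/-- The squared norm of `∂φ_{m,n}/∂y` in `ℂ³ ≅ ℝ⁶` equals
`(m+n)·(m+n − (m−n)cos 2x)/2`. -/
theorem phiMN_partial_y_sq_norm (m n : ℕ) (hm : 0 < m) (hn : 0 < n) (x y : ℝ) :
    ∑ j : Fin 3, ‖deriv (fun s : ℝ => phiMN m n x s j) y‖ ^ 2 =
      ((m : ℝ) + n) * (((m : ℝ) + n) - ((m : ℝ) - n) * Real.cos (2 * x)) / 2 :=
  phiMN_partial_y_sq_norm_general m n x y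
end

section
/- Let m, n be coprime positive integers with m > n and both m and n odd, and set k = √((m² − n²)/(m² + 2mn)). Then √(m² + 2mn)·E(k) − (mn/√(m² + 2mn))·K(k) ≤ 2(m + n) − 3. (Equivalently, Λ_{2(m+n)−3}(M_{m,n}) = 8π·(√(m²+2mn)·E(k) − (mn/√(m²+2mn))·K(k)) ≤ 8π·(2(m+n) − 3), which shows the metric on M_{m,n} is not maximal for Λ_{2(m+n)−3}.) -/
/-!
Since `√(1 − k²x²) ≤ 1`, the integrand of `E(k)` is dominated both by that of `K(k)` and by
`1/√(1 − x²)`, whose integral over `[0, 1]` is `π/2`. With `a = √(m² + 2mn)` and `b = mn/a` this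
gives `a·E(k) − b·K(k) ≤ (a − b)·E(k) ≤ (a − b)·π/2 = π·m(m + n)/(2a)`. As `a > m`, the right-hand
side is below `π(m + n)/2 ≤ 2(m + n) − 3` once `m + n ≥ 8`; for odd `m > n` only `(3, 1)` and
`(5, 1)` remain, and those are checked numerically.
-/

open Real

/-- The complete elliptic integral of the first kind,
`K(k) = ∫₀¹ dx/(√(1−x²)·√(1−k²x²))`. -/
noncomputable def ellK (k : ℝ) : ℝ :=
  ∫ x in (0 : ℝ)..1, 1 / (Real.sqrt (1 - x ^ 2) * Real.sqrt (1 - k ^ 2 * x ^ 2))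

/-- The complete elliptic integral of the second kind,
`E(k) = ∫₀¹ √(1−k²x²)/√(1−x²) dx`. -/
noncomputable def ellE (k : ℝ) : ℝ :=
  ∫ x in (0 : ℝ)..1, Real.sqrt (1 - k ^ 2 * x ^ 2) / Real.sqrt (1 - x ^ 2)

open MeasureTheory intervalIntegral

lemma intervalIntegrable_one_div_sqrt_one_sub_sq :
    IntervalIntegrable (fun x : ℝ => 1 / √(1 - x ^ 2)) volume 0 1 := by
  have h := Polynomial.Chebyshev.intervalIntegrable_sqrt_one_sub_sq_inv.mono_set
    (c := 0) (d := 1) (Set.uIcc_subset_uIcc (by norm_num) (by norm_num))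
  simpa only [Real.sqrt_inv, one_div] using h

lemma integral_one_div_sqrt_one_sub_sq : ∫ x in (0 : ℝ)..1, 1 / √(1 - x ^ 2) = π / 2 := by
  rw [integral_eq_sub_of_hasDerivAt_of_le zero_le_one continuous_arcsin.continuousOn
    (fun x hx => hasDerivAt_arcsin (by linarith [hx.1]) hx.2.ne)
    intervalIntegrable_one_div_sqrt_one_sub_sq]
  simp

lemma sqrt_one_sub_sq_mul_sq_le_one (k x : ℝ) : √(1 - k ^ 2 * x ^ 2) ≤ 1 :=
  Real.sqrt_le_one.2 (by nlinarith [sq_nonneg (k * x)])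

lemma intervalIntegrable_ellE_integrand (k : ℝ) :
    IntervalIntegrable (fun x : ℝ => √(1 - k ^ 2 * x ^ 2) / √(1 - x ^ 2)) volume 0 1 := by
  simp_rw [div_eq_mul_one_div (√(1 - k ^ 2 * _))]
  exact intervalIntegrable_one_div_sqrt_one_sub_sq.continuousOn_mul (by fun_prop)

lemma one_sub_sq_mul_sq_pos {k x : ℝ} (hk : k ^ 2 < 1) (hx : x ∈ Set.Icc (0 : ℝ) 1) :
    0 < 1 - k ^ 2 * x ^ 2 := by
  have hx_sq : x ^ 2 ≤ 1 := pow_le_one₀ hx.1 hx.2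
  nlinarith [mul_le_mul_of_nonneg_left hx_sq (sq_nonneg k)]

lemma intervalIntegrable_ellK_integrand {k : ℝ} (hk : k ^ 2 < 1) :
    IntervalIntegrable (fun x : ℝ => 1 / (√(1 - x ^ 2) * √(1 - k ^ 2 * x ^ 2))) volume 0 1 := by
  simp_rw [← one_div_mul_one_div]
  refine intervalIntegrable_one_div_sqrt_one_sub_sq.mul_continuousOn
    (continuousOn_const.div (by fun_prop) fun x hx => ?_)
  rw [Set.uIcc_of_le zero_le_one] at hx
  exact (Real.sqrt_pos.2 (one_sub_sq_mul_sq_pos hk hx)).ne'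

lemma ellE_le_pi_div_two (k : ℝ) : ellE k ≤ π / 2 := by
  rw [ellE, ← integral_one_div_sqrt_one_sub_sq]
  refine integral_mono_on zero_le_one (intervalIntegrable_ellE_integrand k)
    intervalIntegrable_one_div_sqrt_one_sub_sq fun x _ => ?_
  exact div_le_div_of_nonneg_right (sqrt_one_sub_sq_mul_sq_le_one k x) (Real.sqrt_nonneg _)

lemma ellE_le_ellK {k : ℝ} (hk : k ^ 2 < 1) : ellE k ≤ ellK k := by
  refine integral_mono_on zero_le_one (intervalIntegrable_ellE_integrand k)
    (intervalIntegrable_ellK_integrand hk) fun x hx => ?_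
  have hu : 0 < √(1 - k ^ 2 * x ^ 2) := Real.sqrt_pos.2 (one_sub_sq_mul_sq_pos hk hx)
  have hu_le : √(1 - k ^ 2 * x ^ 2) ≤ 1 / √(1 - k ^ 2 * x ^ 2) :=
    (sqrt_one_sub_sq_mul_sq_le_one k x).trans (one_le_one_div hu (sqrt_one_sub_sq_mul_sq_le_one k x))
  rw [div_eq_mul_one_div, ← one_div_mul_one_div, mul_comm (1 / √(1 - x ^ 2))]
  exact mul_le_mul_of_nonneg_right hu_le (by positivity)

lemma mul_ellE_sub_mul_ellK_le {a b k : ℝ} (hb : 0 ≤ b) (hba : b ≤ a) (hk : k ^ 2 < 1) :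
    a * ellE k - b * ellK k ≤ (a - b) * (π / 2) :=
  calc a * ellE k - b * ellK k ≤ a * ellE k - b * ellE k := by
        gcongr; exact ellE_le_ellK hk
    _ = (a - b) * ellE k := by ring
    _ ≤ (a - b) * (π / 2) := mul_le_mul_of_nonneg_left (ellE_le_pi_div_two k) (sub_nonneg.2 hba)

lemma sub_mul_pi_div_two_le_of_odd {m n : ℕ} (hn : 0 < n) (hmn : n < m) (hm_odd : Odd m)
    (hn_odd : Odd n) :
    (√((m : ℝ) ^ 2 + 2 * m * n) - m * n / √((m : ℝ) ^ 2 + 2 * m * n)) * (π / 2) ≤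
      2 * ((m : ℝ) + n) - 3 := by
  set a := √((m : ℝ) ^ 2 + 2 * m * n)
  have hm : (1 : ℝ) ≤ m := by exact_mod_cast hn.trans hmn
  have ha_sq : a ^ 2 = (m : ℝ) ^ 2 + 2 * m * n := Real.sq_sqrt (by positivity)
  have ha : 0 < a := Real.sqrt_pos.2 (by positivity)
  have h_eq : a - m * n / a = m * (m + n) / a := by field_simp; linarith
  rw [h_eq]
  have hpi := Real.pi_lt_d2
  obtain ⟨rfl, rfl⟩ | ⟨rfl, rfl⟩ | h8 : (m = 3 ∧ n = 1) ∨ (m = 5 ∧ n = 1) ∨ 8 ≤ m + n := by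
    obtain ⟨p, rfl⟩ := hm_odd
    obtain ⟨q, rfl⟩ := hn_odd
    omega
  · have : (3.87 : ℝ) ≤ a := Real.le_sqrt_of_sq_le (by norm_num)
    rw [div_mul_eq_mul_div, div_le_iff₀ ha]
    push_cast
    nlinarith
  · have : (5.9 : ℝ) ≤ a := Real.le_sqrt_of_sq_le (by norm_num)
    rw [div_mul_eq_mul_div, div_le_iff₀ ha]
    push_cast
    nlinarith
  · have h8 : (8 : ℝ) ≤ m + n := by exact_mod_cast h8
    have hma : (m : ℝ) ≤ a := Real.le_sqrt_of_sq_le (by nlinarith)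
    have : (m : ℝ) * (m + n) / a ≤ m + n := by
      rw [div_le_iff₀ ha]; nlinarith
    nlinarith [mul_le_mul_of_nonneg_right this Real.pi_pos.le]

theorem non_maximality_odd_general (m n : ℕ) (hn : 0 < n) (hmn : n < m)
    (hm_odd : Odd m) (hn_odd : Odd n) :
    Real.sqrt ((m : ℝ) ^ 2 + 2 * m * n) *
        ellE (Real.sqrt (((m : ℝ) ^ 2 - n ^ 2) / ((m : ℝ) ^ 2 + 2 * m * n))) -
      (m : ℝ) * n / Real.sqrt ((m : ℝ) ^ 2 + 2 * m * n) *
        ellK (Real.sqrt (((m : ℝ) ^ 2 - n ^ 2) / ((m : ℝ) ^ 2 + 2 * m * n))) ≤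
    2 * ((m : ℝ) + n) - 3 := by
  have hn' : (1 : ℝ) ≤ n := by exact_mod_cast hn
  have hmn' : (n : ℝ) < m := by exact_mod_cast hmn
  have hd : (0 : ℝ) < (m : ℝ) ^ 2 + 2 * m * n := by nlinarith
  have hk : √(((m : ℝ) ^ 2 - n ^ 2) / ((m : ℝ) ^ 2 + 2 * m * n)) ^ 2 < 1 := by
    rw [Real.sq_sqrt (div_nonneg (by nlinarith) hd.le), div_lt_one hd]
    nlinarith
  have hb_le : (m : ℝ) * n / √((m : ℝ) ^ 2 + 2 * m * n) ≤ √((m : ℝ) ^ 2 + 2 * m * n) := by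
    rw [div_le_iff₀ (Real.sqrt_pos.2 hd), Real.mul_self_sqrt hd.le]
    nlinarith
  refine (mul_ellE_sub_mul_ellK_le ?_ hb_le hk).trans
    (sub_mul_pi_div_two_le_of_odd hn hmn hm_odd hn_odd)
  positivity

/-- Non-maximality for `mn` odd: if `m > n` are coprime positive integers, both odd,
and `k = √((m² − n²)/(m² + 2mn))`, then
`√(m² + 2mn)·E(k) − (mn/√(m² + 2mn))·K(k) ≤ 2(m + n) − 3`; equivalently
`Λ_{2(m+n)−3}(M_{m,n}) ≤ 8π·(2(m+n) − 3)`. -/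
theorem non_maximality_odd (m n : ℕ) (hn : 0 < n) (hmn : n < m)
    (hcop : Nat.Coprime m n) (hm_odd : Odd m) (hn_odd : Odd n) :
    Real.sqrt ((m : ℝ) ^ 2 + 2 * m * n) *
        ellE (Real.sqrt (((m : ℝ) ^ 2 - n ^ 2) / ((m : ℝ) ^ 2 + 2 * m * n))) -
      (m : ℝ) * n / Real.sqrt ((m : ℝ) ^ 2 + 2 * m * n) *
        ellK (Real.sqrt (((m : ℝ) ^ 2 - n ^ 2) / ((m : ℝ) ^ 2 + 2 * m * n))) ≤
    2 * ((m : ℝ) + n) - 3 :=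
  non_maximality_odd_general m n hn hmn hm_odd hn_odd
end
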